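/- arXiv:1504.04648 — 6 statements merged into one kernel-verified Lean document; each statement's English description precedes it below -/
import Mathlib

section
/- Let X̄ be a metric space, ∂X ⊆ X̄, and V¹, …, Vⁿ subsets of ∂X. Suppose ε : ∂X → (0,1] is a function such that for every x ∈ ∂X and every i with x ∈ Vⁱ, one has B(x, ε(x)) ∩ ∂X ⊆ ∩{Vʲ : x ∈ Vʲ} (the intersection of all the sets among V¹,…,Vⁿ containing x). Define U(Y) = ∪_{x∈Y} B(x, ε(x)/2) for Y ⊆ ∂X. Then ∩_{i=1}^n U(Vⁱ) = U(∩_{i=1}^n Vⁱ). -/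
open Metric Set

/-- The neighbourhood `U(Y)` of the paper. -/
def halfBalls {X : Type*} [PseudoMetricSpace X] (ε : X → ℝ) (Y : Set X) : Set X :=
  ⋃ x ∈ Y, ball x (ε x / 2)

section

variable {X ι : Type*} [PseudoMetricSpace X] {boundary : Set X} {V : ι → Set X} {ε : X → ℝ}

/-- The triangle inequality through `y` puts `x` in the full ball around `x'`. -/
lemma mem_of_mem_ball_half_of_le (hV : ∀ i, V i ⊆ boundary)
    (hcond : ∀ x ∈ boundary, ∀ i, x ∈ V i →
      ball x (ε x) ∩ boundary ⊆ ⋂ j ∈ {j | x ∈ V j}, V j)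
    {i j : ι} {x x' y : X} (hx : x ∈ V i) (hx' : x' ∈ V j)
    (hy : y ∈ ball x (ε x / 2)) (hy' : y ∈ ball x' (ε x' / 2)) (hle : ε x ≤ ε x') :
    x ∈ V j := by
  have hdist : dist x x' < ε x' := by
    rw [mem_ball] at hy hy'
    calc dist x x' ≤ dist y x + dist y x' := dist_triangle_left x x' y
      _ < ε x / 2 + ε x' / 2 := add_lt_add hy hy'
      _ ≤ ε x' := by linarith
  have hmem := hcond x' (hV j hx') j hx' ⟨hdist, hV i hx⟩
  exact mem_iInter₂.1 hmem j hx'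

lemma iInter_halfBalls_eq [Finite ι] [Nonempty ι] (hV : ∀ i, V i ⊆ boundary)
    (hcond : ∀ x ∈ boundary, ∀ i, x ∈ V i →
      ball x (ε x) ∩ boundary ⊆ ⋂ j ∈ {j | x ∈ V j}, V j) :
    ⋂ i, halfBalls ε (V i) = halfBalls ε (⋂ i, V i) := by
  refine Subset.antisymm (fun y hy => ?_) ?_
  · simp only [halfBalls, mem_iInter, mem_iUnion] at hy
    choose x hxV hyB using hy
    -- the centre with the smallest radius lies in every `V j`
    obtain ⟨i, hmin⟩ := Finite.exists_min (fun j => ε (x j))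
    have hxi : x i ∈ ⋂ j, V j := mem_iInter.2 fun j =>
      mem_of_mem_ball_half_of_le hV hcond (hxV i) (hxV j) (hyB i) (hyB j) (hmin j)
    exact mem_biUnion hxi (hyB i)
  · exact iUnion₂_subset fun x hx =>
      subset_iInter fun i =>
        subset_biUnion_of_mem (u := fun x => ball x (ε x / 2)) (mem_iInter.1 hx i)

end

theorem stmt4_general {X : Type*} [MetricSpace X] (boundary : Set X) (n : ℕ) (hn : 0 < n)
    (V : Fin n → Set X) (hV : ∀ i, V i ⊆ boundary)
    (ε : X → ℝ)
    (hcond : ∀ x ∈ boundary, ∀ i : Fin n, x ∈ V i →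
      Metric.ball x (ε x) ∩ boundary ⊆ ⋂ j ∈ {j : Fin n | x ∈ V j}, V j) :
    (⋂ i : Fin n, ⋃ x ∈ V i, Metric.ball x (ε x / 2)) =
      ⋃ x ∈ ⋂ i : Fin n, V i, Metric.ball x (ε x / 2) := by
  have : Nonempty (Fin n) := ⟨⟨0, hn⟩⟩
  exact iInter_halfBalls_eq hV hcond

/-- Extension lemma: given subsets `V¹, …, Vⁿ` of `∂X ⊆ X̄` and `ε : ∂X → (0,1]` such
that for every `x ∈ ∂X` lying in some `Vⁱ`, the ball `B(x, ε x) ∩ ∂X` is contained in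
the intersection of all the `Vʲ` containing `x`, the sets `U(Y) = ⋃_{x ∈ Y} B(x, ε x / 2)`
satisfy `⋂ᵢ U(Vⁱ) = U(⋂ᵢ Vⁱ)`. -/
theorem stmt4 {X : Type*} [MetricSpace X] (boundary : Set X) (n : ℕ) (hn : 0 < n)
    (V : Fin n → Set X) (hV : ∀ i, V i ⊆ boundary)
    (ε : X → ℝ) (hε0 : ∀ x ∈ boundary, 0 < ε x) (hε1 : ∀ x ∈ boundary, ε x ≤ 1)
    (hcond : ∀ x ∈ boundary, ∀ i : Fin n, x ∈ V i →
      Metric.ball x (ε x) ∩ boundary ⊆ ⋂ j ∈ {j : Fin n | x ∈ V j}, V j) :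
    (⋂ i : Fin n, ⋃ x ∈ V i, Metric.ball x (ε x / 2)) =
      ⋃ x ∈ ⋂ i : Fin n, V i, Metric.ball x (ε x / 2) :=
  stmt4_general boundary n hn V hV ε hcond
end

section
/- In the setting of the extension construction: let X̄ be a metric space, ∂X ⊆ X̄, and U(Y) = ∪_{x∈Y} B(x, ε(x)/2) with ε : ∂X → (0,1] as above. If V, V' ⊆ ∂X are disjoint (and each point of V ∪ V' satisfies the ε-condition with respect to the two-set family {V, V'}), then U(V) ∩ U(V') = ∅. In particular U(V) = U(V') implies V = V' when additionally U(Y) ∩ ∂X = Y for all Y considered. -/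
open Metric

section BallSeparation

variable {X : Type*} [MetricSpace X]

theorem le_dist_of_ball_inter_subset {s B : Set X} {x y : X} {r : ℝ}
    (h : ball x r ∩ B ⊆ s) (hyB : y ∈ B) (hys : y ∉ s) : r ≤ dist y x :=
  not_lt.mp fun hyx => hys (h ⟨mem_ball.mpr hyx, hyB⟩)

theorem disjoint_biUnion_ball_half {s t : Set X} {r : X → ℝ}
    (hs : ∀ x ∈ s, ∀ y ∈ t, r x ≤ dist x y) (ht : ∀ x ∈ s, ∀ y ∈ t, r y ≤ dist x y) :
    Disjoint (⋃ x ∈ s, ball x (r x / 2)) (⋃ y ∈ t, ball y (r y / 2)) := by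
  refine Set.disjoint_left.mpr fun z hzs hzt => ?_
  simp only [Set.mem_iUnion, mem_ball] at hzs hzt
  obtain ⟨x, hx, hzx⟩ := hzs
  obtain ⟨y, hy, hzy⟩ := hzt
  have hxy := hs x hx y hy
  have hyx := ht x hx y hy
  have : dist x y < dist x y :=
    calc dist x y ≤ dist z x + dist z y := dist_triangle_left x y z
      _ < r x / 2 + r y / 2 := by linarith
      _ ≤ dist x y := by linarith
  exact lt_irrefl _ this

end BallSeparation

theorem stmt5_general {X : Type*} [MetricSpace X] (boundary : Set X) (V V' : Set X)
    (hV : V ⊆ boundary) (hV' : V' ⊆ boundary) (hdisj : Disjoint V V')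
    (ε : X → ℝ)
    (hcondV : ∀ x ∈ V, Metric.ball x (ε x) ∩ boundary ⊆ V)
    (hcondV' : ∀ y ∈ V', Metric.ball y (ε y) ∩ boundary ⊆ V') :
    Disjoint (⋃ x ∈ V, Metric.ball x (ε x / 2)) (⋃ y ∈ V', Metric.ball y (ε y / 2)) ∧
    (((⋃ x ∈ V, Metric.ball x (ε x / 2)) ∩ boundary = V) →
      ((⋃ y ∈ V', Metric.ball y (ε y / 2)) ∩ boundary = V') →
      (⋃ x ∈ V, Metric.ball x (ε x / 2)) = (⋃ y ∈ V', Metric.ball y (ε y / 2)) →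
      V = V') := by
  have hsepV : ∀ x ∈ V, ∀ y ∈ V', ε x ≤ dist x y := fun x hx y hy =>
    dist_comm x y ▸ le_dist_of_ball_inter_subset (hcondV x hx) (hV' hy)
      (Set.disjoint_right.mp hdisj hy)
  have hsepV' : ∀ x ∈ V, ∀ y ∈ V', ε y ≤ dist x y := fun x hx y hy =>
    le_dist_of_ball_inter_subset (hcondV' y hy) (hV hx) (Set.disjoint_left.mp hdisj hx)
  refine ⟨disjoint_biUnion_ball_half hsepV hsepV', fun hUV hUV' hU => ?_⟩
  rw [← hUV, ← hUV', hU]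

/-- If `V, V' ⊆ ∂X` are disjoint and satisfy the `ε`-condition
(`B(x, ε x) ∩ ∂X ⊆ V` for `x ∈ V`, and similarly for `V'`), then the enlargements
`U(V) = ⋃_{x ∈ V} B(x, ε x / 2)` and `U(V')` are disjoint. In particular, if moreover
`U(Y) ∩ ∂X = Y` for `Y ∈ {V, V'}`, then `U(V) = U(V')` implies `V = V'`. -/
theorem stmt5 {X : Type*} [MetricSpace X] (boundary : Set X) (V V' : Set X)
    (hV : V ⊆ boundary) (hV' : V' ⊆ boundary) (hdisj : Disjoint V V')
    (ε : X → ℝ) (hε0 : ∀ x ∈ boundary, 0 < ε x) (hε1 : ∀ x ∈ boundary, ε x ≤ 1)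
    (hcondV : ∀ x ∈ V, Metric.ball x (ε x) ∩ boundary ⊆ V)
    (hcondV' : ∀ y ∈ V', Metric.ball y (ε y) ∩ boundary ⊆ V') :
    Disjoint (⋃ x ∈ V, Metric.ball x (ε x / 2)) (⋃ y ∈ V', Metric.ball y (ε y / 2)) ∧
    (((⋃ x ∈ V, Metric.ball x (ε x / 2)) ∩ boundary = V) →
      ((⋃ y ∈ V', Metric.ball y (ε y / 2)) ∩ boundary = V') →
      (⋃ x ∈ V, Metric.ball x (ε x / 2)) = (⋃ y ∈ V', Metric.ball y (ε y / 2)) →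
      V = V') :=
  stmt5_general boundary V V' hV hV' hdisj ε hcondV hcondV'
end

section
/- Let G be a finitely generated group and U a pairwise disjoint G-equivariant family of subsets of G × X̄ for a compact space X̄ such that each member has the form G × U_X̄ with U_X̄ ⊆ X̄ open, and the family covers G × X̄. Then W = ∪_{g∈G} g·U_X̄ (the union of the orbit of one fixed U_X̄ under the induced action on X̄) is closed in X̄, hence compact, and consequently the orbit {g·U_X̄ | g ∈ G} is finite; therefore the stabiliser of U_X̄ has finite index in G. -/
/-!
The `X̄`-components `V` of the members `G × V` of `𝒰` form a `G`-invariant partition of the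
compact space `X̄` into open sets. In such a partition every union of members is closed, its
complement being the union of the remaining members; and only finitely many members are nonempty,
since a finite subcover must already contain each of them. The orbit of `U_X̄` lies in the
partition, so it is finite, and its size is the index of the stabiliser.
-/

open Set Pointwise

section OpenPartition

variable {X : Type*} [TopologicalSpace X] {𝒱 : Set (Set X)}

theorem isClosed_sUnion_of_subset_of_pairwise_disjoint_open_cover
    (hopen : ∀ V ∈ 𝒱, IsOpen V) (hdisj : 𝒱.Pairwise Disjoint) (hcover : ⋃₀ 𝒱 = univ)
    {𝒮 : Set (Set X)} (h𝒮 : 𝒮 ⊆ 𝒱) : IsClosed (⋃₀ 𝒮) := by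
  rw [← isOpen_compl_iff, isOpen_iff_forall_mem_open]
  intro x hx
  obtain ⟨V, hV, hxV⟩ := hcover.symm ▸ mem_univ x
  refine ⟨V, fun y hyV ⟨S, hS, hyS⟩ => ?_, hopen V hV, hxV⟩
  have hSV : S ≠ V := by
    rintro rfl
    exact hx ⟨S, hS, hxV⟩
  exact (hdisj (h𝒮 hS) hV hSV).notMem_of_mem_left hyS hyV

theorem finite_nonempty_of_pairwise_disjoint_open_cover [CompactSpace X]
    (hopen : ∀ V ∈ 𝒱, IsOpen V) (hdisj : 𝒱.Pairwise Disjoint) (hcover : ⋃₀ 𝒱 = univ) :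
    {V ∈ 𝒱 | V.Nonempty}.Finite := by
  obtain ⟨t, ht𝒱, htfin, htcover⟩ :=
    isCompact_univ.elim_finite_subcover_image hopen (sUnion_eq_biUnion ▸ hcover).ge
  refine htfin.subset fun V ⟨hV, x, hxV⟩ => ?_
  obtain ⟨W, hWt, hxW⟩ := mem_iUnion₂.mp (htcover (mem_univ x))
  by_contra hVt
  exact (hdisj hV (ht𝒱 hWt) fun hVW => hVt (hVW ▸ hWt)).notMem_of_mem_left hxV hxW

end OpenPartition

section CylinderBases

variable {α X : Type*} {𝒰 : Set (Set (α × X))}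

theorem univ_prod_injective [Nonempty α] : Function.Injective ((univ : Set α) ×ˢ · : Set X → _) :=
  fun s t h => by simpa only [snd_image_prod univ_nonempty] using congrArg (Prod.snd '' ·) h

def cylinderBases (𝒰 : Set (Set (α × X))) : Set (Set X) := {V | univ ×ˢ V ∈ 𝒰}

theorem orbit_subset_cylinderBases {G : Type*} [Group G] [MulAction G α] [MulAction G X]
    (hequiv : ∀ g : G, ∀ U ∈ 𝒰, g • U ∈ 𝒰) {V : Set X} (hV : V ∈ cylinderBases 𝒰) :
    MulAction.orbit G V ⊆ cylinderBases 𝒰 := by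
  rintro _ ⟨g, rfl⟩
  show univ ×ˢ (g • V) ∈ 𝒰
  simpa only [smul_set_prod, smul_set_univ] using hequiv g _ hV

variable [Nonempty α]

theorem isOpen_of_mem_cylinderBases [TopologicalSpace X]
    (hform : ∀ U ∈ 𝒰, ∃ V : Set X, IsOpen V ∧ U = univ ×ˢ V) {V : Set X}
    (hV : V ∈ cylinderBases 𝒰) : IsOpen V := by
  obtain ⟨W, hW, hVW⟩ := hform _ hV
  rwa [univ_prod_injective hVW]

theorem pairwise_disjoint_cylinderBases (hdisj : 𝒰.Pairwise Disjoint) :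
    (cylinderBases 𝒰).Pairwise Disjoint := fun V hV W hW hVW =>
  (disjoint_prod.mp (hdisj hV hW (univ_prod_injective.ne hVW))).resolve_left
    (by simp)

theorem sUnion_cylinderBases (hform : ∀ U ∈ 𝒰, ∃ V : Set X, U = univ ×ˢ V)
    (hcover : ⋃₀ 𝒰 = univ) : ⋃₀ cylinderBases 𝒰 = univ := by
  refine eq_univ_of_forall fun x => ?_
  obtain ⟨U, hU, hxU⟩ := hcover.symm ▸ mem_univ (Classical.arbitrary α, x)
  obtain ⟨V, rfl⟩ := hform U hU
  exact ⟨V, hU, hxU.2⟩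

end CylinderBases

theorem stmt8_general {G X : Type*} [Group G] [TopologicalSpace X] [CompactSpace X]
    [MulAction G X]
    (𝒰 : Set (Set (G × X)))
    (hform : ∀ U ∈ 𝒰, ∃ V : Set X, IsOpen V ∧ U = Set.univ ×ˢ V)
    (hdisj : 𝒰.Pairwise (Disjoint · ·))
    (hequiv : ∀ (g : G), ∀ U ∈ 𝒰, g • U ∈ 𝒰)
    (hcover : ⋃₀ 𝒰 = Set.univ)
    (UX : Set X) (hmem : Set.univ ×ˢ UX ∈ 𝒰) :
    IsClosed (⋃ g : G, g • UX) ∧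
    IsCompact (⋃ g : G, g • UX) ∧
    (Set.range fun g : G => g • UX).Finite ∧
    (MulAction.stabilizer G UX).index ≠ 0 := by
  have hopen : ∀ V ∈ cylinderBases 𝒰, IsOpen V := fun _ => isOpen_of_mem_cylinderBases hform
  have hdisj' := pairwise_disjoint_cylinderBases hdisj
  have hcover' := sUnion_cylinderBases (fun U hU => (hform U hU).imp fun _ => And.right) hcover
  have horbit : MulAction.orbit G UX ⊆ cylinderBases 𝒰 := orbit_subset_cylinderBases hequiv hmem
  have hclosed : IsClosed (⋃ g : G, g • UX) := by
    rw [← sUnion_range]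
    exact isClosed_sUnion_of_subset_of_pairwise_disjoint_open_cover hopen hdisj' hcover' horbit
  have hfinite : (MulAction.orbit G UX).Finite :=
    ((finite_nonempty_of_pairwise_disjoint_open_cover hopen hdisj' hcover').insert ∅).subset
      fun V hV => V.eq_empty_or_nonempty.imp id fun hne => ⟨horbit hV, hne⟩
  refine ⟨hclosed, hclosed.isCompact, hfinite, ?_⟩
  rw [MulAction.index_stabilizer]
  exact (ncard_pos hfinite).mpr (MulAction.nonempty_orbit UX) |>.ne'

/-- If `𝒰` is a pairwise disjoint, `G`-equivariant cover of `G × X̄` (`X̄` compact,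
`G` acting by homeomorphisms) whose members all have the form `G × (open set)`, and
`Set.univ ×ˢ UX ∈ 𝒰` with `UX` open, then `W = ⋃_g g • UX` is closed (hence compact),
the orbit `{g • UX}` is finite, and the stabiliser of `UX` has finite index in `G`. -/
theorem stmt8 {G X : Type*} [Group G] [TopologicalSpace X] [CompactSpace X]
    [MulAction G X] [ContinuousConstSMul G X]
    (𝒰 : Set (Set (G × X)))
    (hform : ∀ U ∈ 𝒰, ∃ V : Set X, IsOpen V ∧ U = Set.univ ×ˢ V)
    (hdisj : 𝒰.Pairwise (Disjoint · ·))
    (hequiv : ∀ (g : G), ∀ U ∈ 𝒰, g • U ∈ 𝒰)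
    (hcover : ⋃₀ 𝒰 = Set.univ)
    (UX : Set X) (hUXopen : IsOpen UX) (hmem : Set.univ ×ˢ UX ∈ 𝒰) :
    IsClosed (⋃ g : G, g • UX) ∧
    IsCompact (⋃ g : G, g • UX) ∧
    (Set.range fun g : G => g • UX).Finite ∧
    (MulAction.stabilizer G UX).index ≠ 0 :=
  stmt8_general 𝒰 hform hdisj hequiv hcover UX hmem
end

section
/- Let X be a metric space and U any open cover of X. Then dim X = sup_{U ∈ U} dim U, where dim is the Lebesgue covering dimension. -/
/-- `X` has covering dimension at most `n`: every open cover has an open refinement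
in which every point lies in at most `n + 1` members. -/
def CoverDimLE (X : Type*) [TopologicalSpace X] (n : ℕ) : Prop :=
  ∀ 𝒰 : Set (Set X), (∀ U ∈ 𝒰, IsOpen U) → ⋃₀ 𝒰 = Set.univ →
    ∃ 𝒱 : Set (Set X), (∀ V ∈ 𝒱, IsOpen V) ∧ ⋃₀ 𝒱 = Set.univ ∧
      (∀ V ∈ 𝒱, ∃ U ∈ 𝒰, V ⊆ U) ∧
      ∀ x : X, {V ∈ 𝒱 | x ∈ V}.encard ≤ (n + 1 : ℕ)

/-- The Lebesgue covering dimension, as an element of `ℕ∞` (`⊤` if no bound exists). -/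
noncomputable def coverDim (X : Type*) [TopologicalSpace X] : ℕ∞ :=
  sInf {m : ℕ∞ | ∃ n : ℕ, (n : ℕ∞) = m ∧ CoverDimLE X n}

/-! The countable sum theorem for closed sets carries both inequalities. To prove it, shrink a
locally finite cover successively over the closed pieces so that the closures have order `≤ n + 1`
on each piece; the intersection of the shrinkings still covers by point-finiteness, and is swollen
back to an open family of order `≤ n + 1`. An open set is a countable union of closed sets, which
gives `dim U ≤ dim X`. For the converse, a σ-discrete refinement (Stone) of the cover by sets whose
closures lie in its members splits `X` into countably many closed levels, each a discrete union of
closed sets of dimension `≤ n`. -/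

open Set Metric Topology Function

universe u

theorem Set.encard_le_of_forall_finset_card_ne {α : Type*} {s : Set α} {k : ℕ}
    (h : ∀ t : Finset α, ↑t ⊆ s → t.card ≠ k + 1) : s.encard ≤ k := by
  by_contra! hlt
  obtain ⟨t, hts, ht⟩ := exists_subset_encard_eq (Order.add_one_le_of_lt hlt)
  have htfin := finite_of_encard_eq_coe (k := k + 1) (by exact_mod_cast ht)
  refine h htfin.toFinset (by simpa using hts) ?_
  have := htfin.encard_eq_coe_toFinset_card
  rw [ht] at this
  exact_mod_cast this.symm

theorem ENat.le_of_forall_le_natCast {a b : ℕ∞} (h : ∀ n : ℕ, b ≤ n → a ≤ n) : a ≤ b :=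
  le_of_forall_ge fun c hc => by
    induction c using ENat.recTopCoe with
    | top => exact le_top
    | coe n => exact h n hc

theorem exists_forall_mem_of_antitone {α ι : Type*} {B : ℕ → ι → Set α} (hB : Antitone B)
    {x : α} (hfin : {i | x ∈ B 0 i}.Finite) (hx : ∀ k, ∃ i, x ∈ B k i) :
    ∃ i, ∀ k, x ∈ B k i := by
  choose φ hφ using hx
  have : Finite {i | x ∈ B 0 i} := hfin.to_subtype
  obtain ⟨i, hi⟩ := Finite.exists_infinite_fiber fun k =>
    (⟨φ k, hB (Nat.zero_le k) (φ k) (hφ k)⟩ : {i | x ∈ B 0 i})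
  refine ⟨i, fun m => ?_⟩
  obtain ⟨k, hk, hmk⟩ := (infinite_coe_iff.1 hi).exists_gt m
  have hφk : φ k = i := congrArg Subtype.val hk
  exact hB hmk.le i (hφk ▸ hφ k)

theorem CoverDimLE.mono {X : Type*} [TopologicalSpace X] {n m : ℕ} (h : CoverDimLE X n)
    (hnm : n ≤ m) : CoverDimLE X m := by
  intro 𝒰 hUo hU
  obtain ⟨𝒱, hVo, hV, hVU, hord⟩ := h 𝒰 hUo hU
  exact ⟨𝒱, hVo, hV, hVU, fun x => (hord x).trans (by exact_mod_cast Nat.succ_le_succ hnm)⟩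

theorem coverDim_le_coe_iff {X : Type*} [TopologicalSpace X] {n : ℕ} :
    coverDim X ≤ n ↔ CoverDimLE X n := by
  refine ⟨fun h => ?_, fun h => sInf_le ⟨n, rfl, h⟩⟩
  have hne : {m : ℕ∞ | ∃ k : ℕ, (k : ℕ∞) = m ∧ CoverDimLE X k}.Nonempty := by
    by_contra hempty
    rw [not_nonempty_iff_eq_empty] at hempty
    simp [coverDim, hempty] at h
  obtain ⟨k, hk, hX⟩ := csInf_mem hne
  exact hX.mono (by exact_mod_cast hk.trans_le h)

/-- Covering dimension `≤ n` of a subset `S`, measured with open sets of the ambient space.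
Refinements are taken precise (`V i ⊆ U i`); regrouping a refinement shows this loses nothing. -/
def CoverDimLEOn {X : Type u} [TopologicalSpace X] (S : Set X) (n : ℕ) : Prop :=
  ∀ (ι : Type u) (U : ι → Set X), (∀ i, IsOpen (U i)) → S ⊆ ⋃ i, U i →
    ∃ V : ι → Set X, (∀ i, IsOpen (V i)) ∧ (∀ i, V i ⊆ U i) ∧ S ⊆ ⋃ i, V i ∧
      ∀ x ∈ S, {i | x ∈ V i}.encard ≤ (n + 1 : ℕ)

section Topological

variable {X : Type u} [TopologicalSpace X] {n : ℕ}

theorem coverDimLE_iff_coverDimLEOn_univ : CoverDimLE X n ↔ CoverDimLEOn (univ : Set X) n := by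
  constructor
  · intro h ι U hUo hU
    obtain ⟨𝒱, hVo, hV, hVU, hord⟩ :=
      h (range U) (forall_mem_range.2 hUo) (by rw [sUnion_range]; exact univ_subset_iff.1 hU)
    have : ∀ V : 𝒱, ∃ i, (V : Set X) ⊆ U i := fun V => by
      obtain ⟨_, ⟨i, rfl⟩, hVi⟩ := hVU V V.2
      exact ⟨i, hVi⟩
    choose g hg using this
    refine ⟨fun i => ⋃ (V : 𝒱) (_ : g V = i), V, fun i => isOpen_biUnion fun V _ => hVo V V.2,
      fun i => iUnion₂_subset fun V hV => hV ▸ hg V, fun x _ => ?_, fun x _ => ?_⟩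
    · obtain ⟨V, hV, hxV⟩ := hV ▸ mem_univ x
      exact mem_iUnion.2 ⟨g ⟨V, hV⟩, mem_biUnion rfl hxV⟩
    · calc {i | x ∈ ⋃ (V : 𝒱) (_ : g V = i), (V : Set X)}.encard
          ≤ (g '' {V : 𝒱 | x ∈ (V : Set X)}).encard := encard_mono fun i hi => by
            obtain ⟨V, rfl, hxV⟩ := mem_iUnion₂.1 hi
            exact ⟨V, hxV, rfl⟩
        _ ≤ {V : 𝒱 | x ∈ (V : Set X)}.encard := encard_image_le _ _
        _ ≤ {V ∈ 𝒱 | x ∈ V}.encard :=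
            encard_le_encard_of_injOn (fun V hV => ⟨V.2, hV⟩) Subtype.val_injective.injOn
        _ ≤ (n + 1 : ℕ) := hord x
  · intro h 𝒰 hUo hU
    obtain ⟨V, hVo, hVU, hV, hord⟩ :=
      h 𝒰 (fun U => U) (fun U => hUo U U.2) (by rw [← sUnion_eq_iUnion, hU])
    refine ⟨range V, forall_mem_range.2 hVo, ?_, forall_mem_range.2 fun U => ⟨U, U.2, hVU U⟩,
      fun x => ?_⟩
    · rw [sUnion_range]; exact univ_subset_iff.1 hV
    · calc {W ∈ range V | x ∈ W}.encard ≤ (V '' {U | x ∈ V U}).encard :=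
            encard_mono <| by rintro _ ⟨⟨U, rfl⟩, hxU⟩; exact ⟨U, hxU, rfl⟩
        _ ≤ {U | x ∈ V U}.encard := encard_image_le _ _
        _ ≤ (n + 1 : ℕ) := hord x (mem_univ x)

theorem coverDimLEOn_univ_subtype_iff {S : Set X} :
    CoverDimLEOn (univ : Set S) n ↔ CoverDimLEOn S n := by
  constructor
  · intro h ι U hUo hSU
    obtain ⟨V', hV'o, hV'U, hV', hord⟩ := h ι (fun i => (↑) ⁻¹' U i)
      (fun i => (hUo i).preimage continuous_subtype_val) fun x _ => by simpa using hSU x.2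
    choose O hOo hOV using fun i => isOpen_induced_iff.1 (hV'o i)
    have hmem : ∀ (x : S) i, (x : X) ∈ O i ∩ U i ↔ x ∈ V' i := fun x i => by
      rw [← hOV i]
      exact ⟨And.left, fun hx => ⟨hx, hV'U i (hOV i ▸ hx)⟩⟩
    refine ⟨fun i => O i ∩ U i, fun i => (hOo i).inter (hUo i), fun i => inter_subset_right,
      fun x hx => ?_, fun x hx => ?_⟩
    · obtain ⟨i, hi⟩ := mem_iUnion.1 (hV' (mem_univ ⟨x, hx⟩))
      exact mem_iUnion.2 ⟨i, (hmem ⟨x, hx⟩ i).2 hi⟩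
    · simpa only [hmem ⟨x, hx⟩] using hord ⟨x, hx⟩ (mem_univ _)
  · intro h ι U' hU'o hU'
    choose O hOo hOU using fun i => isOpen_induced_iff.1 (hU'o i)
    obtain ⟨V, hVo, hVO, hV, hord⟩ := h ι O hOo fun x hx => by
      obtain ⟨i, hi⟩ := mem_iUnion.1 (hU' (mem_univ ⟨x, hx⟩))
      exact mem_iUnion.2 ⟨i, by rw [← hOU i] at hi; exact hi⟩
    exact ⟨fun i => ((↑) : S → X) ⁻¹' V i, fun i => (hVo i).preimage continuous_subtype_val,
      fun i => hOU i ▸ preimage_mono (hVO i), fun x _ => by simpa using hV x.2,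
      fun x _ => hord x x.2⟩

theorem coverDimLE_subtype_iff {S : Set X} : CoverDimLE S n ↔ CoverDimLEOn S n :=
  coverDimLE_iff_coverDimLEOn_univ.trans coverDimLEOn_univ_subtype_iff

theorem CoverDimLEOn.mono_of_isClosed {S C : Set X} (h : CoverDimLEOn S n) (hCS : C ⊆ S)
    (hC : IsClosed C) : CoverDimLEOn C n := by
  intro ι U hUo hCU
  obtain ⟨V, hVo, hVU, hSV, hord⟩ := h (Option ι) (fun o => o.elim Cᶜ U)
    (by rintro (_ | i); exacts [hC.isOpen_compl, hUo i]) fun x _ => by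
      by_cases hxC : x ∈ C
      · obtain ⟨i, hi⟩ := mem_iUnion.1 (hCU hxC)
        exact mem_iUnion.2 ⟨some i, hi⟩
      · exact mem_iUnion.2 ⟨none, hxC⟩
  refine ⟨fun i => V (some i), fun i => hVo _, fun i => hVU _, fun x hx => ?_, fun x hx =>
    (encard_le_encard_of_injOn (f := some) (fun _ hi => hi) (Option.some_injective ι).injOn).trans
      (hord x (hCS hx))⟩
  obtain ⟨_ | i, hi⟩ := mem_iUnion.1 (hSV (hCS hx))
  · exact absurd hx (hVU none hi)
  · exact mem_iUnion.2 ⟨i, hi⟩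

theorem CoverDimLEOn.iUnion_of_pairwise_disjoint {J : Type*} {S O : J → Set X}
    (hO : ∀ j, IsOpen (O j)) (hSO : ∀ j, S j ⊆ O j) (hdisj : Pairwise (Disjoint on O))
    (h : ∀ j, CoverDimLEOn (S j) n) : CoverDimLEOn (⋃ j, S j) n := by
  intro ι U hUo hU
  have : ∀ j, ∃ V : ι → Set X, (∀ i, IsOpen (V i)) ∧ (∀ i, V i ⊆ U i ∩ O j) ∧
      S j ⊆ ⋃ i, V i ∧ ∀ x ∈ S j, {i | x ∈ V i}.encard ≤ (n + 1 : ℕ) := fun j =>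
    h j ι (fun i => U i ∩ O j) (fun i => (hUo i).inter (hO j)) fun x hx => by
      obtain ⟨i, hi⟩ := mem_iUnion.1 (hU (mem_iUnion.2 ⟨j, hx⟩))
      exact mem_iUnion.2 ⟨i, hi, hSO j hx⟩
  choose V hVo hVU hSV hord using this
  refine ⟨fun i => ⋃ j, V j i, fun i => isOpen_iUnion fun j => hVo j i,
    fun i => iUnion_subset fun j => (hVU j i).trans inter_subset_left,
    iUnion_subset fun j => (hSV j).trans (iUnion_mono fun i => subset_iUnion (V · i) j), ?_⟩
  intro x hx
  obtain ⟨j, hx⟩ := mem_iUnion.1 hx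
  refine (encard_mono fun i hi => ?_).trans (hord j x hx)
  obtain ⟨j', hj'⟩ := mem_iUnion.1 hi
  obtain rfl : j' = j := by
    by_contra hne
    exact (hdisj hne).ne_of_mem (hVU j' i hj').2 (hSO j hx) rfl
  exact hj'

end Topological

section Metric

variable {X : Type u} [MetricSpace X] {n : ℕ}

theorem locallyFinite_of_pairwise_le_dist {ι : Type*} {f : ι → Set X} {ε : ℝ} (hε : 0 < ε)
    (h : Pairwise fun i j => ∀ p ∈ f i, ∀ q ∈ f j, ε ≤ dist p q) : LocallyFinite f := by
  intro x
  refine ⟨ball x (ε / 2), ball_mem_nhds x (half_pos hε), Subsingleton.finite ?_⟩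
  rintro i ⟨p, hp, hpx⟩ j ⟨q, hq, hqx⟩
  by_contra hij
  have := h hij p hp q hq
  have := dist_triangle_right p q x
  rw [mem_ball] at hpx hqx
  linarith

theorem pairwise_disjoint_thickening_of_pairwise_le_dist {ι : Type*} {f : ι → Set X} {ε : ℝ}
    (h : Pairwise fun i j => ∀ p ∈ f i, ∀ q ∈ f j, ε ≤ dist p q) :
    Pairwise (Disjoint on fun i => thickening (ε / 2) (f i)) := by
  intro i j hij
  refine disjoint_left.2 fun x hxi hxj => ?_
  obtain ⟨p, hp, hxp⟩ := mem_thickening_iff.1 hxi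
  obtain ⟨q, hq, hxq⟩ := mem_thickening_iff.1 hxj
  have := h hij p hp q hq
  have := dist_triangle_left p q x
  linarith

/-- Stone's theorem in its σ-discrete form. Well-order the indices; `Z k i` is the set of points
whose first member is `U i` and which see `U i` at scale `ρ k`. Two such points for different
indices are `ρ k` apart, so the `ρ k / 4`-neighbourhoods of the `Z k i` are `ρ k / 2` apart. -/
theorem exists_sigmaDiscrete_refinement {ι : Type*} (U : ι → Set X) (hU : ∀ i, IsOpen (U i)) :
    ∃ D : ℕ → ι → Set X, (∀ k i, IsOpen (D k i)) ∧ (∀ k i, D k i ⊆ U i) ∧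
      ⋃ i, U i ⊆ ⋃ k, ⋃ i, D k i ∧
      ∀ k, ∃ ε > 0, Pairwise fun i j => ∀ p ∈ D k i, ∀ q ∈ D k j, ε ≤ dist p q := by
  let r : ι → ι → Prop := WellOrderingRel
  have wf : WellFounded r := IsWellFounded.wf
  let ρ : ℕ → ℝ := fun k => 1 / (k + 1)
  have hρ : ∀ k, 0 < ρ k := fun k => by positivity
  let Z : ℕ → ι → Set X := fun k i => {x | ball x (ρ k) ⊆ U i ∧ ∀ j, r j i → x ∉ U j}
  refine ⟨fun k i => ⋃ x ∈ Z k i, ball x (ρ k / 4),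
    fun k i => isOpen_biUnion fun _ _ => isOpen_ball,
    fun k i => iUnion₂_subset fun x hx => (ball_subset_ball (by linarith [hρ k])).trans hx.1,
    fun x hx => ?_, fun k => ⟨ρ k / 2, half_pos (hρ k), fun i j hij p hp q hq => ?_⟩⟩
  · have hne : {i | x ∈ U i}.Nonempty := mem_iUnion.1 hx
    let i₀ := wf.min _ hne
    obtain ⟨ε, hε, hball⟩ := Metric.isOpen_iff.1 (hU i₀) x (wf.min_mem _ hne)
    obtain ⟨k, hk⟩ := exists_nat_one_div_lt hε
    have hxZ : x ∈ Z k i₀ :=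
      ⟨(ball_subset_ball hk.le).trans hball, fun j hj hxj => wf.not_lt_min _ hxj hj⟩
    exact mem_iUnion₂.2 ⟨k, i₀, mem_biUnion hxZ (mem_ball_self (by linarith [hρ k]))⟩
  · obtain ⟨x, hx, hpx⟩ := mem_iUnion₂.1 hp
    obtain ⟨y, hy, hqy⟩ := mem_iUnion₂.1 hq
    have far : ∀ {i j x y}, r i j → x ∈ Z k i → y ∈ Z k j → ρ k ≤ dist x y :=
      fun hij hx hy => not_lt.1 fun h => hy.2 _ hij (hx.1 (mem_ball'.2 h))
    have hxy : ρ k ≤ dist x y := by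
      rcases trichotomous_of r i j with h | rfl | h
      · exact far h hx hy
      · exact absurd rfl hij
      · exact dist_comm x y ▸ far h hy hx
    have := dist_triangle4 x p q y
    rw [mem_ball] at hpx hqy
    rw [dist_comm] at hpx
    linarith

theorem exists_locallyFinite_shrink_on_iUnion {ι : Type*} (u : ι → Set X)
    (hu : ∀ i, IsOpen (u i)) :
    ∃ v : ι → Set X, (∀ i, IsOpen (v i)) ∧ (∀ i, v i ⊆ u i) ∧ ⋃ i, u i ⊆ ⋃ i, v i ∧
      (∀ x ∈ ⋃ i, u i, ∃ N ∈ 𝓝 x, {i | (v i ∩ N).Nonempty}.Finite) ∧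
      ∀ i, closure (v i) ∩ ⋃ j, u j ⊆ u i := by
  set Y := ⋃ i, u i
  have hY : IsOpen Y := isOpen_iUnion hu
  obtain ⟨v', hv'o, hv'cov, hv'lf, hv'u⟩ := precise_refinement (fun i => ((↑) : Y → X) ⁻¹' u i)
    (fun i => (hu i).preimage continuous_subtype_val)
    (iUnion_eq_univ_iff.2 fun y => by simpa using mem_iUnion.1 (show (y : X) ∈ Y from y.2))
  obtain ⟨w, hwcov, hwo, hwv⟩ :=
    exists_iUnion_eq_closure_subset hv'o (fun y => hv'lf.point_finite y) hv'cov
  have hwlf : LocallyFinite w := hv'lf.subset fun i => subset_closure.trans (hwv i)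
  refine ⟨fun i => (↑) '' w i, fun i => hY.isOpenMap_subtype_val _ (hwo i), ?_, ?_, ?_, ?_⟩
  · rintro i _ ⟨y, hy, rfl⟩
    exact hv'u i (hwv i (subset_closure hy))
  · intro x hx
    obtain ⟨i, hi⟩ := mem_iUnion.1 (hwcov ▸ mem_univ (⟨x, hx⟩ : Y))
    exact mem_iUnion.2 ⟨i, ⟨x, hx⟩, hi, rfl⟩
  · intro x hx
    obtain ⟨t, ht, hfin⟩ := hwlf ⟨x, hx⟩
    refine ⟨(↑) '' t, hY.isOpenMap_subtype_val.image_mem_nhds ht, hfin.subset ?_⟩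
    rintro i ⟨_, ⟨y, hy, rfl⟩, ⟨z, hz, hzy⟩⟩
    exact ⟨y, hy, Subtype.val_injective hzy ▸ hz⟩
  · rintro i x ⟨hxcl, hxY⟩
    exact hv'u i (hwv i ((closure_subtype (x := ⟨x, hxY⟩)).2 hxcl))

theorem CoverDimLEOn.exists_closure_refinement {F : Set X} (h : CoverDimLEOn F n) {ι : Type u}
    (A : ι → Set X) (hAo : ∀ i, IsOpen (A i)) (hFA : F ⊆ ⋃ i, A i) :
    ∃ P : ι → Set X, (∀ i, IsOpen (P i)) ∧ (∀ i, P i ⊆ A i) ∧ F ⊆ ⋃ i, P i ∧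
      ∀ x ∈ F, {i | x ∈ closure (P i)}.encard ≤ (n + 1 : ℕ) := by
  obtain ⟨V, hVo, hVA, hFV, hord⟩ := h ι A hAo hFA
  obtain ⟨P, hPo, hPV, hVP, -, hcl⟩ := exists_locallyFinite_shrink_on_iUnion V hVo
  exact ⟨P, hPo, fun i => (hPV i).trans (hVA i), hFV.trans hVP,
    fun x hx => (encard_mono fun i hi => hcl i ⟨hi, hFV hx⟩).trans (hord x hx)⟩

theorem CoverDimLEOn.exists_shrink_closure {F S : Set X} (h : CoverDimLEOn F n)
    (hF : IsClosed F) (hFS : F ⊆ S) {ι : Type u} (A : ι → Set X) (hAo : ∀ i, IsOpen (A i))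
    (hSA : S ⊆ ⋃ i, A i) :
    ∃ B : ι → Set X, (∀ i, IsOpen (B i)) ∧ (∀ i, B i ⊆ A i) ∧ S ⊆ ⋃ i, B i ∧
      ∀ x ∈ F, {i | x ∈ closure (B i)}.encard ≤ (n + 1 : ℕ) := by
  obtain ⟨P, hPo, hPA, hFP, hord⟩ := h.exists_closure_refinement A hAo (hFS.trans hSA)
  obtain ⟨Ω, hΩo, hFΩ, hΩP⟩ := normal_exists_closure_subset hF (isOpen_iUnion hPo) hFP
  refine ⟨fun i => (A i \ closure Ω) ∪ P i,
    fun i => ((hAo i).sdiff isClosed_closure).union (hPo i),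
    fun i => union_subset sdiff_subset (hPA i), fun x hx => ?_,
    fun x hx => (encard_mono fun i hi => ?_).trans (hord x hx)⟩
  · by_cases hxΩ : x ∈ closure Ω
    · obtain ⟨i, hi⟩ := mem_iUnion.1 (hΩP hxΩ)
      exact mem_iUnion.2 ⟨i, Or.inr hi⟩
    · obtain ⟨i, hi⟩ := mem_iUnion.1 (hSA hx)
      exact mem_iUnion.2 ⟨i, Or.inl ⟨hi, hxΩ⟩⟩
  · rw [mem_ofPred_eq, closure_union] at hi
    refine hi.resolve_left fun hi' => ?_
    have : Disjoint Ω (closure (A i \ closure Ω)) :=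
      (disjoint_sdiff_right.mono_left subset_closure).closure_right hΩo
    exact this.notMem_of_mem_left (hFΩ hx) hi'

theorem exists_shrinking_of_iUnion_isClosed {T : ℕ → Set X} (hT : ∀ k, IsClosed (T k))
    (h : ∀ k, CoverDimLEOn (T k) n) {ι : Type u} (W : ι → Set X) (hWo : ∀ i, IsOpen (W i))
    (hTW : ⋃ k, T k ⊆ ⋃ i, W i) (hWfin : ∀ x ∈ ⋃ k, T k, {i | x ∈ W i}.Finite) :
    ∃ C : ι → Set X, (∀ i, C i ⊆ W i) ∧ ⋃ k, T k ⊆ ⋃ i, C i ∧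
      ∀ x ∈ ⋃ k, T k, {i | x ∈ closure (C i)}.encard ≤ (n + 1 : ℕ) := by
  let Cover := {A : ι → Set X // (∀ i, IsOpen (A i)) ∧ ⋃ k, T k ⊆ ⋃ i, A i}
  have step : ∀ k (A : Cover), ∃ B : Cover,
      B.1 ≤ A.1 ∧ ∀ x ∈ T k, {i | x ∈ closure (B.1 i)}.encard ≤ (n + 1 : ℕ) := by
    rintro k ⟨A, hAo, hA⟩
    obtain ⟨B, hBo, hBA, hB, hord⟩ :=
      (h k).exists_shrink_closure (hT k) (subset_iUnion T k) A hAo hA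
    exact ⟨⟨B, hBo, hB⟩, hBA, hord⟩
  choose next hle hord using step
  let seq : ℕ → Cover := fun k => Nat.rec ⟨W, hWo, hTW⟩ next k
  have hanti : Antitone fun k => (seq k).1 := antitone_nat_of_succ_le fun k => hle k (seq k)
  refine ⟨fun i => ⋂ k, (seq k).1 i, fun i => iInter_subset_of_subset 0 subset_rfl,
    fun x hx => ?_, fun x hx => ?_⟩
  · obtain ⟨i, hi⟩ := exists_forall_mem_of_antitone hanti (hWfin x hx)
      fun k => mem_iUnion.1 ((seq k).2.2 hx)
    exact mem_iUnion.2 ⟨i, mem_iInter.2 hi⟩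
  · obtain ⟨k, hk⟩ := mem_iUnion.1 hx
    refine (encard_mono fun i hi => ?_).trans (hord k (seq k) x hk)
    exact closure_mono (iInter_subset (fun k => (seq k).1 i) (k + 1)) hi

theorem exists_pos_le_infDist_of_finite {ι : Type*} {C : ι → Set X} {x : X} {N : Set X}
    (hN : N ∈ 𝓝 x) (hfin : {i | (C i ∩ N).Nonempty}.Finite) :
    ∃ δ > 0, ∀ i, (C i).Nonempty → x ∉ closure (C i) → δ ≤ infDist x (C i) := by
  obtain ⟨r, hr, hrN⟩ := Metric.mem_nhds_iff.1 hN
  have hnear : ∀ᶠ δ in 𝓝 (0 : ℝ), ∀ i ∈ {i | (C i ∩ N).Nonempty},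
      (C i).Nonempty → x ∉ closure (C i) → δ ≤ infDist x (C i) := by
    refine (Filter.eventually_all_finite hfin).2 fun i _ => ?_
    by_cases hi : (C i).Nonempty ∧ x ∉ closure (C i)
    · exact (eventually_lt_nhds ((infDist_pos_iff_notMem_closure hi.1).1 hi.2)).mono
        fun δ hδ _ _ => hδ.le
    · exact Filter.Eventually.of_forall fun δ hne hx => absurd ⟨hne, hx⟩ hi
  obtain ⟨δ, ⟨hδ, hδr⟩, hδpos⟩ :=
    (((hnear.and (eventually_lt_nhds hr)).filter_mono nhdsWithin_le_nhds).and
      (self_mem_nhdsWithin : Ioi (0 : ℝ) ∈ 𝓝[>] 0)).exists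
  refine ⟨δ, hδpos, fun i hne hx => ?_⟩
  by_cases hiN : (C i ∩ N).Nonempty
  · exact hδ i hiN hne hx
  · exact hδr.le.trans ((le_infDist hne).2 fun y hy =>
      not_lt.1 fun hlt => hiN ⟨y, hy, hrN (mem_ball'.2 hlt)⟩)

theorem exists_pos_le_sup'_infDist {ι : Type*} {C : ι → Set X} {x : X} {N : Set X}
    (hN : N ∈ 𝓝 x) (hfin : {i | (C i ∩ N).Nonempty}.Finite)
    (hcl : {i | x ∈ closure (C i)}.encard ≤ (n + 1 : ℕ)) :
    ∃ δ > 0, ∀ (t : Finset ι) (ht : t.Nonempty), t.card = n + 2 → (∀ i ∈ t, (C i).Nonempty) →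
      δ ≤ t.sup' ht fun i => infDist x (C i) := by
  obtain ⟨δ, hδ, hδle⟩ := exists_pos_le_infDist_of_finite hN hfin
  refine ⟨δ, hδ, fun t ht hcard hne => ?_⟩
  obtain ⟨i, hit, hxi⟩ : ∃ i ∈ t, x ∉ closure (C i) := by
    by_contra! hall
    have := (encard_mono hall).trans hcl
    rw [encard_coe_eq_coe_finsetCard, hcard] at this
    norm_cast at this
    omega
  exact (hδle i (hne i hit) hxi).trans (Finset.le_sup' (fun i => infDist x (C i)) hit)

/-- With `f t` the largest distance to the sets of an `(n + 2)`-element family `t` and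
`m = inf_t f t`, the set `C i` is swollen to `{2 · dist(·, C i) < m}`: no point lies in `n + 2` of
these, since there `2 f t < m ≤ f t`, and `m > 0` on `S` by the closure-order bound. -/
theorem exists_open_swelling {ι : Type*} {S : Set X} (C : ι → Set X)
    (hlf : ∀ x ∈ S, ∃ N ∈ 𝓝 x, {i | (C i ∩ N).Nonempty}.Finite)
    (hcl : ∀ x ∈ S, {i | x ∈ closure (C i)}.encard ≤ (n + 1 : ℕ)) :
    ∃ v : ι → Set X, (∀ i, IsOpen (v i)) ∧ (∀ i, C i ∩ S ⊆ v i) ∧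
      ∀ x, {i | x ∈ v i}.encard ≤ (n + 1 : ℕ) := by
  let 𝒯 := {t : Finset ι // t.card = n + 2 ∧ ∀ i ∈ t, (C i).Nonempty}
  rcases isEmpty_or_nonempty 𝒯 with h𝒯 | h𝒯
  · refine ⟨fun i => {_x | (C i).Nonempty}, fun i => isOpen_const, fun i x hx => ⟨x, hx.1⟩,
      fun x => encard_le_of_forall_finset_card_ne fun t ht hcard => ?_⟩
    exact h𝒯.false ⟨t, hcard, fun i hi => ht hi⟩
  have ht : ∀ t : 𝒯, t.1.Nonempty := fun t => Finset.card_pos.1 (by rw [t.2.1]; omega)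
  let f : 𝒯 → X → ℝ := fun t x => t.1.sup' (ht t) fun i => infDist x (C i)
  have hf0 : ∀ t x, 0 ≤ f t x := fun t x =>
    infDist_nonneg.trans (Finset.le_sup' (fun i => infDist x (C i)) (ht t).choose_spec)
  have hf : ∀ t x y, f t x ≤ f t y + dist x y := fun t x y => Finset.sup'_le _ _ fun i hi =>
    infDist_le_infDist_add_dist.trans
      (add_le_add_left (Finset.le_sup' (fun i => infDist y (C i)) hi) _)
  let m : X → ℝ := fun x => ⨅ t, f t x
  have hm : ∀ x t, m x ≤ f t x := fun x t => ciInf_le ⟨0, forall_mem_range.2 (hf0 · x)⟩ t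
  have hmc : Continuous m := (LipschitzWith.of_le_add fun x y =>
    sub_le_iff_le_add.1 (le_ciInf fun t => by linarith [hm x t, hf t x y])).continuous
  have hmpos : ∀ x ∈ S, 0 < m x := fun x hx => by
    obtain ⟨N, hN, hfin⟩ := hlf x hx
    obtain ⟨δ, hδ, hδle⟩ := exists_pos_le_sup'_infDist hN hfin (hcl x hx)
    exact hδ.trans_le (le_ciInf fun t => hδle t.1 (ht t) t.2.1 t.2.2)
  refine ⟨fun i => {x | (C i).Nonempty ∧ 2 * infDist x (C i) < m x},
    fun i => isOpen_const.inter
      (isOpen_lt (continuous_const.mul (continuous_infDist_pt (C i))) hmc),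
    fun i x hx => ⟨⟨x, hx.1⟩, by simpa [infDist_zero_of_mem hx.1] using hmpos x hx.2⟩,
    fun x => encard_le_of_forall_finset_card_ne fun t hts hcard => ?_⟩
  let t' : 𝒯 := ⟨t, hcard, fun i hi => (hts hi).1⟩
  have : 2 * f t' x < m x := by
    rw [← lt_div_iff₀' two_pos, Finset.sup'_lt_iff]
    exact fun i hi => (lt_div_iff₀' two_pos).2 (hts hi).2
  linarith [hm x t', hf0 t' x]

theorem CoverDimLEOn.iUnion_of_isClosed {T : ℕ → Set X} (hT : ∀ k, IsClosed (T k))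
    (h : ∀ k, CoverDimLEOn (T k) n) : CoverDimLEOn (⋃ k, T k) n := by
  intro ι U hUo hU
  obtain ⟨W, hWo, hWU, hUW, hWlf, -⟩ := exists_locallyFinite_shrink_on_iUnion U hUo
  have hWlf' : ∀ x ∈ ⋃ k, T k, ∃ N ∈ 𝓝 x, {i | (W i ∩ N).Nonempty}.Finite :=
    fun x hx => hWlf x (hU hx)
  obtain ⟨C, hCW, hC, hCcl⟩ := exists_shrinking_of_iUnion_isClosed hT h W hWo (hU.trans hUW)
    fun x hx => by
      obtain ⟨N, hN, hfin⟩ := hWlf' x hx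
      exact hfin.subset fun i hi => ⟨x, hi, mem_of_mem_nhds hN⟩
  obtain ⟨v, hvo, hCv, hord⟩ := exists_open_swelling C
    (fun x hx => by
      obtain ⟨N, hN, hfin⟩ := hWlf' x hx
      exact ⟨N, hN, hfin.subset fun i => Nonempty.mono (inter_subset_inter_left _ (hCW i))⟩)
    hCcl
  refine ⟨fun i => W i ∩ v i, fun i => (hWo i).inter (hvo i),
    fun i => inter_subset_left.trans (hWU i), fun x hx => ?_,
    fun x _ => (encard_mono fun i hi => hi.2).trans (hord x)⟩
  obtain ⟨i, hi⟩ := mem_iUnion.1 (hC hx)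
  exact mem_iUnion.2 ⟨i, hCW i hi, hCv i ⟨hi, hx⟩⟩

theorem IsOpen.coverDimLEOn {G : Set X} (hG : IsOpen G) (h : CoverDimLEOn (univ : Set X) n) :
    CoverDimLEOn G n := by
  obtain ⟨T, hTc, -, rfl, -⟩ := hG.exists_iUnion_isClosed
  exact CoverDimLEOn.iUnion_of_isClosed hTc fun k => h.mono_of_isClosed (subset_univ _) (hTc k)

/-- Refine the cover σ-discretely by sets whose closures lie in its members. Each level of the
refinement is a discrete union of closed sets of dimension `≤ n`, hence closed of dimension `≤ n`,
and the countable sum theorem finishes. -/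
theorem coverDimLEOn_univ_of_isOpen_cover (𝒰 : Set (Set X)) (hopen : ∀ U ∈ 𝒰, IsOpen U)
    (hcover : ⋃₀ 𝒰 = univ) (h : ∀ U ∈ 𝒰, CoverDimLEOn U n) : CoverDimLEOn (univ : Set X) n := by
  have hball : ∀ x : X, ∃ r > 0, ∃ U ∈ 𝒰, closedBall x r ⊆ U := fun x => by
    obtain ⟨U, hU, hxU⟩ := hcover ▸ mem_univ x
    obtain ⟨r, hr, hrU⟩ := nhds_basis_closedBall.mem_iff.1 ((hopen U hU).mem_nhds hxU)
    exact ⟨r, hr, U, hU, hrU⟩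
  choose r hr U hU hrU using hball
  obtain ⟨D, hDo, hDU, hcov, hsep⟩ := exists_sigmaDiscrete_refinement (fun x => ball x (r x))
    fun x => isOpen_ball
  choose ε hε hε' using hsep
  have hdim : ∀ k x, CoverDimLEOn (closure (D k x)) n := fun k x =>
    (h _ (hU x)).mono_of_isClosed
      ((closure_mono (hDU k x)).trans (closure_ball_subset_closedBall.trans (hrU x)))
      isClosed_closure
  have hlevel : ∀ k, CoverDimLEOn (⋃ x, closure (D k x)) n := fun k =>
    CoverDimLEOn.iUnion_of_pairwise_disjoint (fun _ => isOpen_thickening)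
      (fun x => closure_subset_thickening (half_pos (hε k)) _)
      (by simpa only [thickening_closure] using
        pairwise_disjoint_thickening_of_pairwise_le_dist (hε' k))
      (hdim k)
  have huniv : ⋃ k, ⋃ x, closure (D k x) = univ :=
    univ_subset_iff.1 fun y _ => iUnion₂_mono (fun k x => subset_closure)
      (hcov (mem_iUnion.2 ⟨y, mem_ball_self (hr y)⟩))
  rw [← huniv]
  exact CoverDimLEOn.iUnion_of_isClosed
    (fun k => ((locallyFinite_of_pairwise_le_dist (hε k) (hε' k)).closure).isClosed_iUnion
      fun _ => isClosed_closure) hlevel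

end Metric

/-- For any open cover `𝒰` of a metric space `X`,
`dim X = sup_{U ∈ 𝒰} dim U`. -/
theorem stmt13 {X : Type*} [MetricSpace X] (𝒰 : Set (Set X))
    (hopen : ∀ U ∈ 𝒰, IsOpen U) (hcover : ⋃₀ 𝒰 = Set.univ) :
    coverDim X = ⨆ U ∈ 𝒰, coverDim U := by
  apply le_antisymm
  · refine ENat.le_of_forall_le_natCast fun n hn => ?_
    rw [coverDim_le_coe_iff, coverDimLE_iff_coverDimLEOn_univ]
    exact coverDimLEOn_univ_of_isOpen_cover 𝒰 hopen hcover fun U hU =>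
      coverDimLE_subtype_iff.1 (coverDim_le_coe_iff.1 (iSup₂_le_iff.1 hn U hU))
  · refine iSup₂_le fun U hU => ENat.le_of_forall_le_natCast fun n hn => ?_
    rw [coverDim_le_coe_iff, coverDimLE_subtype_iff]
    exact (hopen U hU).coverDimLEOn
      (coverDimLE_iff_coverDimLEOn_univ.1 (coverDim_le_coe_iff.1 hn))
end

section
/- Let G be a finitely generated group with word metric, X̄ a compact space with a G-action, and F a family of subgroups of G. If there exists, for a given d < ∞, an open F-cover U of G × X̄ (action g(h,x)=(gh,x)) with G-Lebesgue number d (every B(g,d) × {x} is contained in some member), then the family I = { B(U,−d) | U ∈ U } is an open F-cover of G × X̄ whose (G,d)-multiplicity is at most dim U + 1; i.e., each set B(g,d) × {x} intersects at most dim U + 1 members of I. -/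
/-!
Shrinking `U` to `B(U,-d)` commutes with the action because the metric is left-invariant, and it
keeps open sets open because balls are finite and `G` is discrete. If `B(g,d) × {x}` meets `B(U,-d)`
at `(h,x)`, then `g ∈ B(h,d)` by symmetry of the metric, so `(g,x) ∈ U`: the members of `ℐ`
meeting `B(g,d) × {x}` come from members of `𝒰` containing `(g,x)`, of which there are at
most `n + 1`.
-/

open Pointwise

/-- `B(U, -d) = {(h,x) | B(h,d) × {x} ⊆ U}`. -/
def Bneg {G X : Type*} [MetricSpace G] (U : Set (G × X)) (d : ℝ) : Set (G × X) :=
  {p : G × X | (Metric.closedBall p.1 d) ×ˢ ({p.2} : Set X) ⊆ U}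

open Metric

section Erosion

variable {G X : Type*} [MetricSpace G] {U : Set (G × X)} {d : ℝ}

theorem mem_Bneg_iff {p : G × X} : p ∈ Bneg U d ↔ ∀ k ∈ closedBall p.1 d, (k, p.2) ∈ U := by
  simp only [Bneg, Set.mem_ofPred_eq, Set.prod_singleton, Set.image_subset_iff]
  rfl

theorem Bneg_subset (hd : 0 ≤ d) : Bneg U d ⊆ U := fun p hp =>
  mem_Bneg_iff.mp hp p.1 (mem_closedBall_self hd)

theorem mem_of_closedBall_prod_inter_Bneg_nonempty {g : G} {x : X}
    (h : (closedBall g d ×ˢ {x} ∩ Bneg U d).Nonempty) : (g, x) ∈ U := by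
  obtain ⟨⟨k, y⟩, ⟨hk, rfl⟩, hU⟩ := h
  exact mem_Bneg_iff.mp hU g (mem_closedBall_comm.mp hk)

theorem encard_setOf_Bneg_meeting_closedBall_prod_le (𝒰 : Set (Set (G × X))) (g : G) (x : X) :
    {W ∈ (Bneg · d) '' 𝒰 | (closedBall g d ×ˢ {x} ∩ W).Nonempty}.encard ≤
      {U ∈ 𝒰 | (g, x) ∈ U}.encard := by
  refine (Set.encard_le_encard ?_).trans (Set.encard_image_le (Bneg · d) _)
  rintro _ ⟨⟨U, hU, rfl⟩, hmeet⟩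
  exact ⟨U, ⟨hU, mem_of_closedBall_prod_inter_Bneg_nonempty hmeet⟩, rfl⟩

theorem isOpen_Bneg [TopologicalSpace X] [DiscreteTopology G]
    (hball : ∀ g : G, (closedBall g d).Finite) (hU : IsOpen U) : IsOpen (Bneg U d) := by
  have hslice : Bneg U d = ⋃ h : G, {h} ×ˢ ⋂ k ∈ closedBall h d, Prod.mk k ⁻¹' U := by
    ext ⟨g, x⟩
    simp [mem_Bneg_iff]
  rw [hslice]
  exact isOpen_iUnion fun h => (isOpen_discrete _).prod <|
    (hball h).isOpen_biInter fun k _ => hU.preimage (Continuous.prodMk_right k)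

end Erosion

section Equivariance

variable {G X : Type*} [Group G] [MetricSpace G] [IsIsometricSMul G G] [MulAction G X]
  {U : Set (G × X)} {d : ℝ}

theorem smul_Bneg (g : G) : g • Bneg U d = Bneg (g • U) d := by
  ext ⟨h, x⟩
  simp only [Set.mem_smul_set_iff_inv_smul_mem, mem_Bneg_iff, Prod.smul_mk, smul_eq_mul]
  have hball (k : G) : g⁻¹ * k ∈ closedBall (g⁻¹ * h) d ↔ k ∈ closedBall h d := by
    simp only [mem_closedBall, ← smul_eq_mul, dist_smul]
  constructor
  · exact fun H k hk => H _ ((hball k).mpr hk)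
  · intro H k hk
    simpa using H (g * k) ((hball _).mp (by simpa using hk))

theorem smul_Bneg_eq_or_disjoint (hd : 0 ≤ d) (hU : ∀ g : G, g • U = U ∨ Disjoint (g • U) U)
    (g : G) : g • Bneg U d = Bneg U d ∨ Disjoint (g • Bneg U d) (Bneg U d) := by
  rw [smul_Bneg]
  exact (hU g).imp (fun h => by rw [h]) fun h => h.mono (Bneg_subset hd) (Bneg_subset hd)

theorem stabilizer_Bneg (hd : 0 ≤ d) (hU : ∀ g : G, g • U = U ∨ Disjoint (g • U) U)
    (hne : (Bneg U d).Nonempty) :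
    MulAction.stabilizer G (Bneg U d) = MulAction.stabilizer G U := by
  ext g
  simp only [MulAction.mem_stabilizer_iff]
  refine ⟨fun hg => (hU g).resolve_right fun hdisj => ?_, fun hg => by rw [smul_Bneg, hg]⟩
  obtain ⟨p, hp⟩ := hne
  have hpg : p ∈ g • Bneg U d := hg.symm ▸ hp
  rw [smul_Bneg] at hpg
  exact Set.disjoint_left.mp hdisj (Bneg_subset hd hpg) (Bneg_subset hd hp)

end Equivariance

theorem stmt18_general {G X : Type*} [Group G] [MetricSpace G] [DiscreteTopology G]
    [TopologicalSpace X] [MulAction G X]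
    (hinv : ∀ g h k : G, dist (g * h) (g * k) = dist h k)
    (hball : ∀ (g : G) (r : ℝ), (Metric.closedBall g r).Finite)
    (F : Set (Subgroup G))
    (d : ℝ) (hd : 0 < d) (n : ℕ)
    (𝒰 : Set (Set (G × X)))
    (hopen : ∀ U ∈ 𝒰, IsOpen U)
    (hequiv : ∀ (g : G), ∀ U ∈ 𝒰, g • U ∈ 𝒰)
    (hFsubset : ∀ U ∈ 𝒰, ∀ g : G, g • U = U ∨ Disjoint (g • U) U)
    (hstab : ∀ U ∈ 𝒰, MulAction.stabilizer G U ∈ F)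
    (hLeb : ∀ (g : G) (x : X), ∃ U ∈ 𝒰,
      (Metric.closedBall g d) ×ˢ ({x} : Set X) ⊆ U)
    (hdim : ∀ p : G × X, {U ∈ 𝒰 | p ∈ U}.encard ≤ (n + 1 : ℕ)) :
    ∀ ℐ : Set (Set (G × X)), ℐ = (fun U => Bneg U d) '' 𝒰 →
      (∀ W ∈ ℐ, IsOpen W) ∧
      (⋃₀ ℐ = Set.univ) ∧
      (∀ (g : G), ∀ W ∈ ℐ, g • W ∈ ℐ) ∧
      (∀ W ∈ ℐ, ∀ g : G, g • W = W ∨ Disjoint (g • W) W) ∧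
      (∀ U ∈ 𝒰, (Bneg U d).Nonempty →
        MulAction.stabilizer G (Bneg U d) = MulAction.stabilizer G U ∧
        MulAction.stabilizer G (Bneg U d) ∈ F) ∧
      (∀ (g : G) (x : X),
        {W ∈ ℐ | (((Metric.closedBall g d) ×ˢ ({x} : Set X)) ∩ W).Nonempty}.encard
          ≤ (n + 1 : ℕ)) := by
  have : IsIsometricSMul G G := ⟨fun g => Isometry.of_dist_eq (hinv g)⟩
  rintro ℐ rfl
  refine ⟨?_, ?_, ?_, ?_, ?_, ?_⟩
  · rintro _ ⟨U, hU, rfl⟩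
    exact isOpen_Bneg (hball · d) (hopen U hU)
  · refine Set.eq_univ_of_forall fun ⟨g, x⟩ => ?_
    obtain ⟨U, hU, hsub⟩ := hLeb g x
    exact ⟨Bneg U d, ⟨U, hU, rfl⟩, hsub⟩
  · rintro g _ ⟨U, hU, rfl⟩
    exact ⟨g • U, hequiv g U hU, (smul_Bneg g).symm⟩
  · rintro _ ⟨U, hU, rfl⟩
    exact smul_Bneg_eq_or_disjoint hd.le (hFsubset U hU)
  · intro U hU hne
    have hstab_eq := stabilizer_Bneg hd.le (hFsubset U hU) hne
    exact ⟨hstab_eq, hstab_eq ▸ hstab U hU⟩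
  · exact fun g x =>
      (encard_setOf_Bneg_meeting_closedBall_prod_le 𝒰 g x).trans (hdim (g, x))

/-- If `𝒰` is an open `F`-cover of `G × X̄` with `G`-Lebesgue number `d` and
dimension at most `n`, then `ℐ = {B(U,-d) | U ∈ 𝒰}` is an open `F`-cover of
`G × X̄` with `(G,d)`-multiplicity at most `n + 1`: each `B(g,d) × {x}` meets at
most `n + 1` members of `ℐ`. (`G` finitely generated, word metric modelled as a
left-invariant metric with finite balls, `G` discrete; `X̄` compact.) -/
theorem stmt18 {G X : Type*} [Group G] [MetricSpace G] [DiscreteTopology G]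
    [TopologicalSpace X] [CompactSpace X] [MulAction G X]
    (hinv : ∀ g h k : G, dist (g * h) (g * k) = dist h k)
    (hball : ∀ (g : G) (r : ℝ), (Metric.closedBall g r).Finite)
    (F : Set (Subgroup G))
    (d : ℝ) (hd : 0 < d) (n : ℕ)
    (𝒰 : Set (Set (G × X)))
    (hopen : ∀ U ∈ 𝒰, IsOpen U)
    (hequiv : ∀ (g : G), ∀ U ∈ 𝒰, g • U ∈ 𝒰)
    (hFsubset : ∀ U ∈ 𝒰, ∀ g : G, g • U = U ∨ Disjoint (g • U) U)
    (hstab : ∀ U ∈ 𝒰, MulAction.stabilizer G U ∈ F)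
    (hLeb : ∀ (g : G) (x : X), ∃ U ∈ 𝒰,
      (Metric.closedBall g d) ×ˢ ({x} : Set X) ⊆ U)
    (hdim : ∀ p : G × X, {U ∈ 𝒰 | p ∈ U}.encard ≤ (n + 1 : ℕ)) :
    ∀ ℐ : Set (Set (G × X)), ℐ = (fun U => Bneg U d) '' 𝒰 →
      (∀ W ∈ ℐ, IsOpen W) ∧
      (⋃₀ ℐ = Set.univ) ∧
      (∀ (g : G), ∀ W ∈ ℐ, g • W ∈ ℐ) ∧
      (∀ W ∈ ℐ, ∀ g : G, g • W = W ∨ Disjoint (g • W) W) ∧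
      (∀ U ∈ 𝒰, (Bneg U d).Nonempty →
        MulAction.stabilizer G (Bneg U d) = MulAction.stabilizer G U ∧
        MulAction.stabilizer G (Bneg U d) ∈ F) ∧
      (∀ (g : G) (x : X),
        {W ∈ ℐ | (((Metric.closedBall g d) ×ˢ ({x} : Set X)) ∩ W).Nonempty}.encard
          ≤ (n + 1 : ℕ)) :=
  stmt18_general hinv hball F d hd n 𝒰 hopen hequiv hFsubset hstab hLeb hdim
end

section
/- Let G be a finitely generated group, X̄ a compact space with G-action, F a virtually closed family of subgroups, and suppose I is an open F-cover of G × X̄ with (G,α)-multiplicity at most n+1. Define U = { B(V, α) | V ∈ I } where B(V,α) = { (h,x) | (B(h,α) × {x}) ∩ V ≠ ∅ }. Then U is an open G-invariant cover with G-Lebesgue number α, dimension at most n, and each member B(V,α) has stabiliser containing the stabiliser of V as a subgroup of index at most (n+1)!, hence all stabilisers of members of U belong to F. -/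
/-!
A point `p` lies in `B(V, α)` exactly when `V` meets `B(p₁, α) × {p₂}`, so the multiplicity
bound for `ℐ` passes to `𝒰`. If `p ∈ V` and `k` stabilises `B(V, α)`, then `k • V ∈ ℐ` and
`p ∈ B(k • V, α) = k • B(V, α) = B(V, α)`, so the orbit of `V` under `Stab B(V, α)` consists of
at most `n + 1` members of `ℐ`; by orbit–stabiliser, `[Stab B(V, α) : Stab V] ≤ n + 1 ≤ (n + 1)!`.
-/

open Pointwise

/-- `B(V, α) = {(h,x) | (B(h,α) × {x}) ∩ V ≠ ∅}`. -/
def Bpos {G X : Type*} [MetricSpace G] (V : Set (G × X)) (α : ℝ) : Set (G × X) :=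
  {p : G × X | (((Metric.closedBall p.1 α) ×ˢ ({p.2} : Set X)) ∩ V).Nonempty}

namespace MulAction

theorem relIndex_stabilizer_eq_ncard_orbit {G α : Type*} [Group G] [MulAction G α]
    (K : Subgroup G) (a : α) : (stabilizer G a).relIndex K = (orbit K a).ncard := by
  have hK : (stabilizer G a).subgroupOf K = stabilizer K a := by ext; rfl
  rw [Subgroup.relIndex, hK, index_stabilizer]

end MulAction

open MulAction

section Bpos

variable {G X : Type*} [MetricSpace G] {V : Set (G × X)} {α : ℝ}

theorem mem_Bpos {p : G × X} : p ∈ Bpos V α ↔ ∃ h : G, dist p.1 h ≤ α ∧ (h, p.2) ∈ V := by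
  constructor
  · rintro ⟨⟨h, y⟩, ⟨hd, rfl⟩, hV⟩
    exact ⟨h, by rwa [dist_comm], hV⟩
  · rintro ⟨h, hd, hV⟩
    exact ⟨(h, p.2), ⟨by rwa [Metric.mem_closedBall, dist_comm], rfl⟩, hV⟩

theorem closedBall_prod_subset_Bpos {g : G} {x : X} (hgx : (g, x) ∈ V) :
    Metric.closedBall g α ×ˢ {x} ⊆ Bpos V α := by
  rintro ⟨h, y⟩ ⟨hd, rfl⟩
  exact mem_Bpos.2 ⟨g, hd, hgx⟩

theorem subset_Bpos (hα : 0 ≤ α) : V ⊆ Bpos V α := fun _ hp =>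
  closedBall_prod_subset_Bpos hp ⟨Metric.mem_closedBall_self hα, rfl⟩

theorem isOpen_Bpos [DiscreteTopology G] [TopologicalSpace X] (hV : IsOpen V) :
    IsOpen (Bpos V α) := by
  refine isOpen_iff_forall_mem_open.2 fun p hp => ?_
  obtain ⟨h, hd, hhV⟩ := mem_Bpos.1 hp
  refine ⟨{p.1} ×ˢ (Prod.mk h ⁻¹' V), ?_, (isOpen_discrete _).prod
    (hV.preimage (Continuous.prodMk_right h)), rfl, hhV⟩
  rintro ⟨g, y⟩ ⟨rfl, hy⟩
  exact mem_Bpos.2 ⟨h, hd, hy⟩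

section Action

variable [Group G] [MulAction G X] (hinv : ∀ g h k : G, dist (g * h) (g * k) = dist h k)
include hinv

theorem smul_Bpos_subset (g : G) (V : Set (G × X)) (α : ℝ) :
    g • Bpos V α ⊆ Bpos (g • V) α := by
  rintro _ ⟨p, hp, rfl⟩
  obtain ⟨h, hd, hV⟩ := mem_Bpos.1 hp
  exact mem_Bpos.2 ⟨g * h, (hinv g p.1 h).trans_le hd, Set.smul_mem_smul_set hV⟩

theorem smul_Bpos (g : G) (V : Set (G × X)) (α : ℝ) : g • Bpos V α = Bpos (g • V) α := by
  refine (smul_Bpos_subset hinv g V α).antisymm ?_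
  calc Bpos (g • V) α = g • g⁻¹ • Bpos (g • V) α := (smul_inv_smul g _).symm
    _ ⊆ g • Bpos (g⁻¹ • g • V) α := Set.smul_set_mono (smul_Bpos_subset hinv _ _ _)
    _ = g • Bpos V α := by rw [inv_smul_smul]

theorem stabilizer_le_stabilizer_Bpos (V : Set (G × X)) (α : ℝ) :
    stabilizer G V ≤ stabilizer G (Bpos V α) := fun g hg => by
  rw [mem_stabilizer_iff, smul_Bpos hinv, mem_stabilizer_iff.1 hg]

theorem orbit_stabilizer_Bpos_subset {ℐ : Set (Set (G × X))}
    (hℐ : ∀ g : G, ∀ V ∈ ℐ, g • V ∈ ℐ) (hα : 0 ≤ α) (hV : V ∈ ℐ) {p : G × X} (hp : p ∈ V) :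
    orbit (stabilizer G (Bpos V α)) V ⊆ {V' ∈ ℐ | p ∈ Bpos V' α} := by
  rintro _ ⟨k, rfl⟩
  refine ⟨hℐ k V hV, ?_⟩
  change p ∈ Bpos ((k : G) • V) α
  rw [ ← smul_Bpos hinv, mem_stabilizer_iff.1 k.2]
  exact subset_Bpos hα hp

theorem relIndex_stabilizer_Bpos_le {ℐ : Set (Set (G × X))}
    (hℐ : ∀ g : G, ∀ V ∈ ℐ, g • V ∈ ℐ) (hα : 0 ≤ α) (hV : V ∈ ℐ) {p : G × X} (hp : p ∈ V)
    {m : ℕ} (hm : {V' ∈ ℐ | p ∈ Bpos V' α}.encard ≤ m) :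
    (stabilizer G V).relIndex (stabilizer G (Bpos V α)) ≠ 0 ∧
      (stabilizer G V).relIndex (stabilizer G (Bpos V α)) ≤ m := by
  obtain ⟨hfin, hcard⟩ := Set.encard_le_coe_iff_finite_ncard_le.1 hm
  have horbit := orbit_stabilizer_Bpos_subset hinv hℐ hα hV hp
  rw [relIndex_stabilizer_eq_ncard_orbit]
  exact ⟨Set.ncard_ne_zero_of_mem (mem_orbit_self V) (hfin.subset horbit),
    (Set.ncard_le_ncard horbit hfin).trans hcard⟩

end Action

theorem exists_closedBall_prod_subset_Bpos {ℐ : Set (Set (G × X))} (hℐ : ⋃₀ ℐ = Set.univ)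
    (g : G) (x : X) : ∃ V ∈ ℐ, Metric.closedBall g α ×ˢ {x} ⊆ Bpos V α := by
  obtain ⟨V, hV, hgx⟩ := Set.mem_sUnion.1 (hℐ.symm ▸ Set.mem_univ (g, x))
  exact ⟨V, hV, closedBall_prod_subset_Bpos hgx⟩

theorem sUnion_image_Bpos_eq_univ {ℐ : Set (Set (G × X))} (hℐ : ⋃₀ ℐ = Set.univ)
    (hα : 0 ≤ α) : ⋃₀ ((Bpos · α) '' ℐ) = Set.univ := by
  refine Set.eq_univ_of_forall fun p => ?_
  obtain ⟨V, hV, hp⟩ := Set.mem_sUnion.1 (hℐ.symm ▸ Set.mem_univ p)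
  exact ⟨Bpos V α, Set.mem_image_of_mem _ hV, subset_Bpos hα hp⟩

theorem encard_setOf_image_Bpos_mem_le (ℐ : Set (Set (G × X))) (p : G × X) :
    {W ∈ (Bpos · α) '' ℐ | p ∈ W}.encard ≤ {V ∈ ℐ | p ∈ Bpos V α}.encard := by
  refine (Set.encard_mono ?_).trans (Set.encard_image_le (Bpos · α) _)
  rintro _ ⟨⟨V, hV, rfl⟩, hp⟩
  exact ⟨V, ⟨hV, hp⟩, rfl⟩

end Bpos

theorem stmt19_general {G X : Type*} [Group G] [MetricSpace G] [DiscreteTopology G]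
    [TopologicalSpace X] [MulAction G X]
    (hinv : ∀ g h k : G, dist (g * h) (g * k) = dist h k)
    (F : Set (Subgroup G))
    (hvc : ∀ K ∈ F, ∀ K' : Subgroup G, K ≤ K' → K.relIndex K' ≠ 0 → K' ∈ F)
    (α : ℝ) (hα : 0 < α) (n : ℕ)
    (ℐ : Set (Set (G × X)))
    (hIopen : ∀ V ∈ ℐ, IsOpen V)
    (hIcover : ⋃₀ ℐ = Set.univ)
    (hIequiv : ∀ (g : G), ∀ V ∈ ℐ, g • V ∈ ℐ)
    (hIstab : ∀ V ∈ ℐ, MulAction.stabilizer G V ∈ F)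
    (hmult : ∀ (g : G) (x : X),
      {V ∈ ℐ | (((Metric.closedBall g α) ×ˢ ({x} : Set X)) ∩ V).Nonempty}.encard
        ≤ (n + 1 : ℕ)) :
    ∀ 𝒰 : Set (Set (G × X)), 𝒰 = (fun V => Bpos V α) '' ℐ →
      (∀ W ∈ 𝒰, IsOpen W) ∧
      (⋃₀ 𝒰 = Set.univ) ∧
      (∀ (g : G), ∀ W ∈ 𝒰, g • W ∈ 𝒰) ∧
      (∀ (g : G) (x : X), ∃ W ∈ 𝒰,
        (Metric.closedBall g α) ×ˢ ({x} : Set X) ⊆ W) ∧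
      (∀ p : G × X, {W ∈ 𝒰 | p ∈ W}.encard ≤ (n + 1 : ℕ)) ∧
      (∀ V ∈ ℐ, V.Nonempty →
        MulAction.stabilizer G V ≤ MulAction.stabilizer G (Bpos V α) ∧
        (MulAction.stabilizer G V).relIndex (MulAction.stabilizer G (Bpos V α)) ≠ 0 ∧
        (MulAction.stabilizer G V).relIndex (MulAction.stabilizer G (Bpos V α))
          ≤ Nat.factorial (n + 1) ∧
        MulAction.stabilizer G (Bpos V α) ∈ F) := by
  rintro _ rfl
  refine ⟨?_, sUnion_image_Bpos_eq_univ hIcover hα.le, ?_, fun g x => ?_,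
    fun p => (encard_setOf_image_Bpos_mem_le ℐ p).trans (hmult p.1 p.2), ?_⟩
  · rintro _ ⟨V, hV, rfl⟩
    exact isOpen_Bpos (hIopen V hV)
  · rintro g _ ⟨V, hV, rfl⟩
    exact ⟨g • V, hIequiv g V hV, (smul_Bpos hinv g V α).symm⟩
  · obtain ⟨V, hV, hball⟩ := exists_closedBall_prod_subset_Bpos hIcover g x
    exact ⟨Bpos V α, Set.mem_image_of_mem _ hV, hball⟩
  · rintro V hV ⟨p, hp⟩
    have hle := stabilizer_le_stabilizer_Bpos hinv V α
    obtain ⟨hne, hidx⟩ := relIndex_stabilizer_Bpos_le hinv hIequiv hα.le hV hp (hmult p.1 p.2)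
    exact ⟨hle, hne, hidx.trans (Nat.self_le_factorial _), hvc _ (hIstab V hV) _ hle hne⟩

/-- If `ℐ` is an open `F`-cover of `G × X̄` with `(G,α)`-multiplicity at most `n+1`
(`F` virtually closed), then `𝒰 = {B(V,α) | V ∈ ℐ}` is an open `G`-invariant cover
with `G`-Lebesgue number `α` and dimension at most `n`, and for each nonempty `V ∈ ℐ`
the stabiliser of `B(V,α)` contains the stabiliser of `V` with index at most `(n+1)!`,
hence lies in `F`. -/
theorem stmt19 {G X : Type*} [Group G] [MetricSpace G] [DiscreteTopology G]
    [TopologicalSpace X] [CompactSpace X] [MulAction G X]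
    (hinv : ∀ g h k : G, dist (g * h) (g * k) = dist h k)
    (hball : ∀ (g : G) (r : ℝ), (Metric.closedBall g r).Finite)
    (F : Set (Subgroup G))
    (hconj : ∀ K ∈ F, ∀ g : G, (K.map (MulAut.conj g).toMonoidHom) ∈ F)
    (hsub : ∀ K ∈ F, ∀ K' : Subgroup G, K' ≤ K → K' ∈ F)
    (hvc : ∀ K ∈ F, ∀ K' : Subgroup G, K ≤ K' → K.relIndex K' ≠ 0 → K' ∈ F)
    (α : ℝ) (hα : 0 < α) (n : ℕ)
    (ℐ : Set (Set (G × X)))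
    (hIopen : ∀ V ∈ ℐ, IsOpen V)
    (hIcover : ⋃₀ ℐ = Set.univ)
    (hIequiv : ∀ (g : G), ∀ V ∈ ℐ, g • V ∈ ℐ)
    (hIFsubset : ∀ V ∈ ℐ, ∀ g : G, g • V = V ∨ Disjoint (g • V) V)
    (hIstab : ∀ V ∈ ℐ, MulAction.stabilizer G V ∈ F)
    (hmult : ∀ (g : G) (x : X),
      {V ∈ ℐ | (((Metric.closedBall g α) ×ˢ ({x} : Set X)) ∩ V).Nonempty}.encard
        ≤ (n + 1 : ℕ)) :
    ∀ 𝒰 : Set (Set (G × X)), 𝒰 = (fun V => Bpos V α) '' ℐ →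
      (∀ W ∈ 𝒰, IsOpen W) ∧
      (⋃₀ 𝒰 = Set.univ) ∧
      (∀ (g : G), ∀ W ∈ 𝒰, g • W ∈ 𝒰) ∧
      (∀ (g : G) (x : X), ∃ W ∈ 𝒰,
        (Metric.closedBall g α) ×ˢ ({x} : Set X) ⊆ W) ∧
      (∀ p : G × X, {W ∈ 𝒰 | p ∈ W}.encard ≤ (n + 1 : ℕ)) ∧
      (∀ V ∈ ℐ, V.Nonempty →
        MulAction.stabilizer G V ≤ MulAction.stabilizer G (Bpos V α) ∧
        (MulAction.stabilizer G V).relIndex (MulAction.stabilizer G (Bpos V α)) ≠ 0 ∧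
        (MulAction.stabilizer G V).relIndex (MulAction.stabilizer G (Bpos V α))
          ≤ Nat.factorial (n + 1) ∧
        MulAction.stabilizer G (Bpos V α) ∈ F) :=
  stmt19_general hinv F hvc α hα n ℐ hIopen hIcover hIequiv hIstab hmult
end
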